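/- In the sphere braid group B_6(S²) on 6 strands, presented over FreeGroup (Fin 5) with generators σ_1,…,σ_5, let β be the image of the word σ_5³ σ_3 σ_1⁻¹ σ_4 σ_2⁻¹ and let Δ be the image of σ_1 σ_2 σ_3 σ_4 σ_5. Then for every integer k, the element β is not conjugate in B_6(S²) to Δ^k. (The exponent sum of β is 3, that of Δ^k is 5k, and 3 is not congruent to 5k modulo 10.) -/
import Mathlib


/-- The relators of the sphere braid group `B_l(S²)`. -/
def sphereBraidRels (l : ℕ) : Set (FreeGroup (Fin (l - 1))) :=
  {r | (∃ i j : Fin (l - 1), 2 ≤ |(i : ℤ) - (j : ℤ)| ∧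
          r = FreeGroup.of i * FreeGroup.of j * (FreeGroup.of i)⁻¹ * (FreeGroup.of j)⁻¹) ∨
       (∃ i j : Fin (l - 1), (i : ℕ) + 1 = (j : ℕ) ∧
          r = FreeGroup.of i * FreeGroup.of j * FreeGroup.of i *
              (FreeGroup.of j)⁻¹ * (FreeGroup.of i)⁻¹ * (FreeGroup.of j)⁻¹) ∨
       r = (List.ofFn fun i : Fin (l - 1) => FreeGroup.of i).prod *
           ((List.ofFn fun i : Fin (l - 1) => FreeGroup.of i).reverse).prod}

/-- The word `σ_5³ σ_3 σ_1⁻¹ σ_4 σ_2⁻¹` in the free group on the five generators of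
`B_6(S²)` (the generator indexed by `i : Fin 5` is `σ_{i+1}`). -/
def betaWord : FreeGroup (Fin (6 - 1)) :=
  (FreeGroup.of 4) ^ 3 * FreeGroup.of 2 * (FreeGroup.of 0)⁻¹ *
    FreeGroup.of 3 * (FreeGroup.of 1)⁻¹

/-- The word `Δ = σ_1 σ_2 σ_3 σ_4 σ_5`. -/
def deltaWord : FreeGroup (Fin (6 - 1)) :=
  FreeGroup.of 0 * FreeGroup.of 1 * FreeGroup.of 2 * FreeGroup.of 3 * FreeGroup.of 4

/-- Exponent sum mod 10, as a hom to `Multiplicative (ZMod 10)`. -/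
def expSum : FreeGroup (Fin (6 - 1)) →* Multiplicative (ZMod 10) :=
  FreeGroup.lift fun _ => Multiplicative.ofAdd (1 : ZMod 10)

lemma expSum_rels : ∀ r ∈ sphereBraidRels 6, expSum r = 1 := by
  rintro r (⟨i, j, -, rfl⟩ | ⟨i, j, -, rfl⟩ | rfl) <;>
    simp [expSum, List.ofFn, ← ofAdd_add, ← ofAdd_neg] <;> decide

/-- The induced hom on the presented group. -/
def expSumP : PresentedGroup (sphereBraidRels 6) →* Multiplicative (ZMod 10) :=
  PresentedGroup.toGroup expSum_rels

lemma expSumP_mk (w : FreeGroup (Fin (6 - 1))) :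
    expSumP (PresentedGroup.mk (sphereBraidRels 6) w) = expSum w := rfl

theorem beta_not_conjugate_to_power_of_delta (k : ℤ) :
    ¬ IsConj (PresentedGroup.mk (sphereBraidRels 6) betaWord)
        ((PresentedGroup.mk (sphereBraidRels 6) deltaWord) ^ k) := by
  intro h
  have h2 := isConj_iff_eq.mp (expSumP.map_isConj h)
  rw [map_zpow, expSumP_mk, expSumP_mk] at h2
  have hb : expSum betaWord = Multiplicative.ofAdd (3 : ZMod 10) := by
    simp [expSum, betaWord, ← ofAdd_add, ← ofAdd_neg]
    decide
  have hd : expSum deltaWord = Multiplicative.ofAdd (5 : ZMod 10) := by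
    simp [expSum, deltaWord, ← ofAdd_add]
    decide
  rw [hb, hd, ← ofAdd_zsmul] at h2
  have h3 : (3 : ZMod 10) = k • (5 : ZMod 10) := Multiplicative.ofAdd.injective h2
  rw [zsmul_eq_mul] at h3
  have h4 : (2 : ZMod 10) * 3 = 2 * ((k : ZMod 10) * 5) := by rw [← h3]
  rw [show 2 * ((k : ZMod 10) * 5) = (k : ZMod 10) * 10 by ring,
    show ((10 : ZMod 10)) = 0 from rfl, mul_zero] at h4
  exact absurd h4 (by decide)
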